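/- Let m ≥ 2, n ≥ m+1, and let v₁, v₂ be adjacent vertices of the Johnson graph J_n(m,m-1). Then there is exactly one maximal clique H of J_n(m,m-1) containing both v₁ and v₂ such that ⋂_{v ∈ H} ν(v) = ∅. -/

import Mathlib

/-- Vertices of the Johnson graph `J_n(m, m-1)`: the `m`-element subsets of `{1, …, n}`
(modelled as `Fin n`).  The label set `ν(v)` of a vertex `v` is `v.val`. -/
abbrev JohnsonVertex (n m : ℕ) := {A : Finset (Fin n) // A.card = m}

/-- The Johnson graph `J_n(m, m-1)`: two distinct `m`-subsets are adjacent iff they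
intersect in exactly `m - 1` elements. -/
def johnsonGraph (n m : ℕ) : SimpleGraph (JohnsonVertex n m) where
  Adj v w := v ≠ w ∧ (v.1 ∩ w.1).card = m - 1
  symm := ⟨fun v w h => ⟨h.1.symm, by rw [Finset.inter_comm]; exact h.2⟩⟩
  loopless := ⟨fun v h => h.1 rfl⟩

/-!
Put `S = ν(v₁) ∩ ν(v₂)` and `T = ν(v₁) ∪ ν(v₂)`, so `|S| = m - 1` and `|T| = m + 1`. The
`m`-subsets of `T` form a clique `W = window n m T` whose intersection is empty. A common
neighbour `u` of `v₁, v₂` with `u ⊄ T` must contain `S`: otherwise, for `s ∈ S \ u`, it would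
contain `T \ {s}` and hence equal it. Such a `u` meets `T \ {s}` (`s ∈ S`) in only `m - 2`
points, so any clique through `v₁`, `v₂` and some `T \ {s}` with `s ∈ S` lies in `W`; this
gives maximality of `W`. Conversely a clique `H ∋ v₁, v₂` with empty intersection has a vertex
missing some `s ∈ S`, and that vertex is `T \ {s}`, so `H ⊆ W`.
-/

open Finset

theorem Finset.card_inter_lt_card_left {α : Type*} [DecidableEq α] {s t : Finset α}
    (h : ¬ s ⊆ t) : (s ∩ t).card < s.card :=
  card_lt_card (inter_subset_left.ssubset_of_not_subset fun h' => h (h'.trans inter_subset_right))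

namespace johnsonGraph

variable {n m : ℕ} {u v w v₁ v₂ : JohnsonVertex n m}

def window (n m : ℕ) (T : Finset (Fin n)) : Finset (JohnsonVertex n m) := {v | v.1 ⊆ T}

@[simp]
theorem mem_window {T : Finset (Fin n)} : v ∈ window n m T ↔ v.1 ⊆ T := by
  simp [window]

theorem card_union_of_adj (h : (johnsonGraph n m).Adj v w) : (v.1 ∪ w.1).card = m + 1 := by
  have hm : m ≠ 0 := by
    rintro rfl
    exact h.1 (Subtype.ext (by rw [card_eq_zero.1 v.2, card_eq_zero.1 w.2]))
  have := card_union_add_card_inter v.1 w.1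
  rw [v.2, w.2, h.2] at this
  omega

theorem nonempty_inter_of_adj (hm : 2 ≤ m) (h : (johnsonGraph n m).Adj v w) :
    (v.1 ∩ w.1).Nonempty :=
  card_pos.1 (by rw [h.2]; omega)

theorem isClique_window {T : Finset (Fin n)} (hT : T.card ≤ m + 1) :
    (johnsonGraph n m).IsClique (window n m T : Set (JohnsonVertex n m)) := by
  intro v hv w hw hvw
  rw [mem_coe, mem_window] at hv hw
  have hvw' : ¬ v.1 ⊆ w.1 := fun h =>
    hvw (Subtype.ext (eq_of_subset_of_card_le h (w.2.trans v.2.symm).le))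
  have hlt : (v.1 ∩ w.1).card < m := by
    simpa only [v.2] using card_inter_lt_card_left hvw'
  have hunion : (v.1 ∪ w.1).card ≤ m + 1 := (card_le_card (union_subset hv hw)).trans hT
  have := card_union_add_card_inter v.1 w.1
  rw [v.2, w.2] at this
  exact ⟨hvw, by omega⟩

theorem inf_window_eq_empty {T : Finset (Fin n)} (hT : m + 1 ≤ T.card) :
    (window n m T).inf Subtype.val = ∅ := by
  ext x
  simp only [mem_inf, mem_window, notMem_empty, iff_false, not_forall]
  obtain ⟨A, hA, hAcard⟩ := exists_subset_card_eq (s := T.erase x) (n := m)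
    (by have := pred_card_le_card_erase (s := T) (a := x); omega)
  exact ⟨⟨A, hAcard⟩, hA.trans (erase_subset x T), fun hx => notMem_erase x T (hA hx)⟩

theorem erase_subset_of_adj (h : (johnsonGraph n m).Adj u v) {s : Fin n} (hsv : s ∈ v.1)
    (hsu : s ∉ u.1) : v.1.erase s ⊆ u.1 := by
  have : u.1 ∩ v.1 = v.1.erase s := by
    refine eq_of_subset_of_card_le (fun x hx => ?_) ?_
    · exact mem_erase.2 ⟨ne_of_mem_of_not_mem (mem_inter.1 hx).1 hsu, (mem_inter.1 hx).2⟩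
    · rw [card_erase_of_mem hsv, v.2, h.2]
  exact this ▸ inter_subset_left

theorem inter_subset_of_adj_of_not_subset_union (h₁₂ : (johnsonGraph n m).Adj v₁ v₂)
    (h₁ : (johnsonGraph n m).Adj u v₁) (h₂ : (johnsonGraph n m).Adj u v₂)
    (hu : ¬ u.1 ⊆ v₁.1 ∪ v₂.1) : v₁.1 ∩ v₂.1 ⊆ u.1 := by
  intro s hs
  by_contra hsu
  obtain ⟨hs₁, hs₂⟩ := mem_inter.1 hs
  have herase : (v₁.1 ∪ v₂.1).erase s ⊆ u.1 := by
    rw [erase_union_distrib]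
    exact union_subset (erase_subset_of_adj h₁ hs₁ hsu) (erase_subset_of_adj h₂ hs₂ hsu)
  have heq : (v₁.1 ∪ v₂.1).erase s = u.1 := eq_of_subset_of_card_le herase (by
    rw [card_erase_of_mem (mem_union_left _ hs₁), card_union_of_adj h₁₂, u.2]; rfl)
  exact hu (heq ▸ erase_subset s _)

theorem not_adj_of_eq_erase {T : Finset (Fin n)} {s : Fin n} (hw : w.1 = T.erase s)
    (hsu : s ∈ u.1) (hsT : s ∈ T) (hu : ¬ u.1 ⊆ T) : ¬ (johnsonGraph n m).Adj u w := by
  rintro ⟨-, h⟩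
  have hlt : (u.1 ∩ T).card < m := by
    simpa only [u.2] using card_inter_lt_card_left hu
  rw [hw, inter_erase, card_erase_of_mem (mem_inter.2 ⟨hsu, hsT⟩)] at h
  have := card_pos.2 ⟨s, mem_inter.2 ⟨hsu, hsT⟩⟩
  omega

theorem subset_window_of_isClique (h₁₂ : (johnsonGraph n m).Adj v₁ v₂)
    {K : Finset (JohnsonVertex n m)} (hK : (johnsonGraph n m).IsClique (K : Set _))
    (h₁ : v₁ ∈ K) (h₂ : v₂ ∈ K) (hw : w ∈ K) {s : Fin n} (hs : s ∈ v₁.1 ∩ v₂.1)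
    (hwT : w.1 = (v₁.1 ∪ v₂.1).erase s) : K ⊆ window n m (v₁.1 ∪ v₂.1) := by
  intro u hu
  rw [mem_window]
  by_contra huT
  have hu₁ : u ≠ v₁ := by rintro rfl; exact huT subset_union_left
  have hu₂ : u ≠ v₂ := by rintro rfl; exact huT subset_union_right
  have huw : u ≠ w := by rintro rfl; exact huT (hwT ▸ erase_subset s _)
  have hSu := inter_subset_of_adj_of_not_subset_union h₁₂ (hK hu h₁ hu₁) (hK hu h₂ hu₂) huT
  exact not_adj_of_eq_erase hwT (hSu hs) (inter_subset_union hs) huT (hK hu hw huw)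

theorem maximal_window (hm : 2 ≤ m) (h₁₂ : (johnsonGraph n m).Adj v₁ v₂) :
    Maximal (fun K : Finset (JohnsonVertex n m) => (johnsonGraph n m).IsClique (K : Set _))
      (window n m (v₁.1 ∪ v₂.1)) := by
  have hT := card_union_of_adj h₁₂
  obtain ⟨s, hs⟩ := nonempty_inter_of_adj hm h₁₂
  let w : JohnsonVertex n m :=
    ⟨(v₁.1 ∪ v₂.1).erase s, by rw [card_erase_of_mem (inter_subset_union hs), hT]; rfl⟩
  refine ⟨isClique_window hT.le, fun K hK hWK => ?_⟩
  exact subset_window_of_isClique h₁₂ hK (hWK (mem_window.2 subset_union_left))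
    (hWK (mem_window.2 subset_union_right)) (w := w) (hWK (mem_window.2 (erase_subset s _)))
    hs rfl

theorem eq_window_of_maximal (hm : 2 ≤ m) (h₁₂ : (johnsonGraph n m).Adj v₁ v₂)
    {H : Finset (JohnsonVertex n m)}
    (hH : Maximal (fun K : Finset (JohnsonVertex n m) => (johnsonGraph n m).IsClique (K : Set _)) H)
    (h₁ : v₁ ∈ H) (h₂ : v₂ ∈ H) (hinf : H.inf Subtype.val = ∅) :
    H = window n m (v₁.1 ∪ v₂.1) := by
  obtain ⟨s, hs⟩ := nonempty_inter_of_adj hm h₁₂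
  obtain ⟨w, hw, hsw⟩ : ∃ w ∈ H, s ∉ w.1 := by
    by_contra! h
    simpa [hinf] using mem_inf.2 h
  have hw₁ : w ≠ v₁ := by rintro rfl; exact hsw (mem_inter.1 hs).1
  have hw₂ : w ≠ v₂ := by rintro rfl; exact hsw (mem_inter.1 hs).2
  have hwT : w.1 ⊆ v₁.1 ∪ v₂.1 := by
    by_contra h
    exact hsw (inter_subset_of_adj_of_not_subset_union h₁₂ (hH.1 hw h₁ hw₁) (hH.1 hw h₂ hw₂) h hs)
  have hw_eq : w.1 = (v₁.1 ∪ v₂.1).erase s := eq_of_subset_of_card_le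
    (subset_erase.2 ⟨hwT, hsw⟩)
    (by rw [card_erase_of_mem (inter_subset_union hs), card_union_of_adj h₁₂, w.2]; rfl)
  have hHW := subset_window_of_isClique h₁₂ hH.1 h₁ h₂ hw hs hw_eq
  exact hHW.antisymm (hH.2 (isClique_window (card_union_of_adj h₁₂).le) hHW)

end johnsonGraph

open johnsonGraph in
theorem stmt11_general (n m : ℕ) (hm : 2 ≤ m)
    (v₁ v₂ : JohnsonVertex n m) (hadj : (johnsonGraph n m).Adj v₁ v₂) :
    ∃! H : Finset (JohnsonVertex n m),
      Maximal (fun s : Finset (JohnsonVertex n m) => (johnsonGraph n m).IsClique ↑s) H ∧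
      v₁ ∈ H ∧ v₂ ∈ H ∧ H.inf Subtype.val = ∅ :=
  ⟨window n m (v₁.1 ∪ v₂.1),
    ⟨maximal_window hm hadj, mem_window.2 subset_union_left, mem_window.2 subset_union_right,
      inf_window_eq_empty (card_union_of_adj hadj).ge⟩,
    fun _ ⟨hH, h₁, h₂, hinf⟩ => eq_window_of_maximal hm hadj hH h₁ h₂ hinf⟩

/-- Every edge of `J_n(m,m-1)` lies in exactly one maximal clique with empty
intersection set. -/
theorem stmt11 (n m : ℕ) (hm : 2 ≤ m) (hn : m + 1 ≤ n)
    (v₁ v₂ : JohnsonVertex n m) (hadj : (johnsonGraph n m).Adj v₁ v₂) :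
    ∃! H : Finset (JohnsonVertex n m),
      Maximal (fun s : Finset (JohnsonVertex n m) => (johnsonGraph n m).IsClique ↑s) H ∧
      v₁ ∈ H ∧ v₂ ∈ H ∧ H.inf Subtype.val = ∅ :=
  stmt11_general n m hm v₁ v₂ hadj
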